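/- Let u_0, u_1 be the standard basis vectors of the F_2-vector space F_2^2, and let e_{p,q} ∈ F_2^{2×2} denote the standard basis matrices. Define A_{0,0} = u_0, A_{0,1} = u_1, A_{1,0} = u_1, A_{1,1} = u_0 + u_1. Then the tensor T_6 = ∑_{i=0}^{1} ∑_{j=0}^{1} ∑_{k=0}^{1} A_{i,j} ⊗ e_{j,k} ⊗ e_{k,i} ∈ F_2^2 ⊗ F_2^{2×2} ⊗ F_2^{2×2} has tensor rank at least 6. (This is the 2×2 matrix multiplication tensor restricted to first matrices A with a_{1,0} = a_{0,1} and a_{1,1} = a_{0,0} + a_{0,1}.) -/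

import Mathlib

open TensorProduct

/-- The standard basis matrix of `F_2^{2×2}` with a `1` in position `(p,q)`. -/
def e (p q : Fin 2) : Matrix (Fin 2) (Fin 2) (ZMod 2) :=
  Matrix.single p q 1

/-- The standard basis vectors of `F_2^2`. -/
def u (i : Fin 2) : Fin 2 → ZMod 2 := Pi.single i 1

/-- The first-factor entries `A₀₀ = u₀, A₀₁ = u₁, A₁₀ = u₁, A₁₁ = u₀ + u₁`. -/
def A : Fin 2 → Fin 2 → (Fin 2 → ZMod 2) :=
  ![![u 0, u 1], ![u 1, u 0 + u 1]]

namespace T6Aux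

abbrev F2 := ZMod 2
abbrev M2 := Matrix (Fin 2) (Fin 2) F2
abbrev M4 := Matrix (Fin 2 × Fin 2) (Fin 2 × Fin 2) F2

/-- Outer product of vectorizations. -/
def Ofun (X Y : M2) : M4 := Matrix.of fun p q => X p.1 p.2 * Y q.1 q.2

lemma Ofun_eq_mul (X Y : M2) :
    Ofun X Y =
      Matrix.replicateCol Unit (fun p => X p.1 p.2) * Matrix.replicateRow Unit (fun q => Y q.1 q.2) := by
  ext p q
  simp [Ofun, Matrix.mul_apply]

lemma rank_Ofun_le (X Y : M2) : (Ofun X Y).rank ≤ 1 := by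
  rw [Ofun_eq_mul]
  exact le_trans (Matrix.rank_mul_le_left _ _)
    (le_trans (Matrix.rank_le_card_width _) (by simp))

lemma rank_add_le (B C : M4) : (B + C).rank ≤ B.rank + C.rank := by
  rw [Matrix.rank, Matrix.rank, Matrix.rank, Matrix.mulVecLin_add]
  have hle : LinearMap.range (B.mulVecLin + C.mulVecLin) ≤
      LinearMap.range B.mulVecLin ⊔ LinearMap.range C.mulVecLin := by
    rintro x ⟨y, rfl⟩
    exact Submodule.add_mem_sup ⟨y, rfl⟩ ⟨y, rfl⟩
  exact le_trans (Submodule.finrank_mono hle)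
    (Submodule.finrank_add_le_finrank_add_finrank _ _)

lemma rank_sum_le {ι : Type*} (s : Finset ι) (f : ι → M4)
    (hf : ∀ t, (f t).rank ≤ 1) : (∑ t ∈ s, f t).rank ≤ s.card := by
  classical
  induction s using Finset.induction with
  | empty => simp
  | @insert x s hx ih =>
    rw [Finset.sum_insert hx, Finset.card_insert_of_notMem hx]
    refine le_trans (rank_add_le _ _) ?_
    have h1 := hf x
    omega

/-- The bilinear outer-product map. -/
def Obil : M2 →ₗ[F2] M2 →ₗ[F2] M4 :=
  LinearMap.mk₂ F2 Ofun
    (fun X X' Y => by ext p q; simp [Ofun, add_mul])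
    (fun c X Y => by ext p q; simp [Ofun, smul_eq_mul, mul_assoc])
    (fun X Y Y' => by ext p q; simp [Ofun, mul_add])
    (fun c X Y => by ext p q; simp [Ofun, smul_eq_mul]; ring)

/-- The slicing linear map for a functional determined by `c`. -/
noncomputable def L (c : Fin 2 → F2) :
    ((Fin 2 → F2) ⊗[F2] (M2 ⊗[F2] M2)) →ₗ[F2] M4 :=
  TensorProduct.lift <| LinearMap.mk₂ F2
    (fun x z => (c 0 * x 0 + c 1 * x 1) • TensorProduct.lift Obil z)
    (fun x y z => by
      have hsc : c 0 * (x + y) 0 + c 1 * (x + y) 1 =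
          (c 0 * x 0 + c 1 * x 1) + (c 0 * y 0 + c 1 * y 1) := by
        simp [Pi.add_apply]; ring
      rw [hsc, add_smul])
    (fun s x z => by
      have hsc : c 0 * (s • x) 0 + c 1 * (s • x) 1 =
          s * (c 0 * x 0 + c 1 * x 1) := by
        simp [Pi.smul_apply, smul_eq_mul]; ring
      rw [hsc, mul_smul])
    (fun x z z' => by rw [map_add, smul_add])
    (fun s x z => by rw [map_smul, smul_comm])

lemma L_tmul (c : Fin 2 → F2) (x : Fin 2 → F2) (X Y : M2) :
    L c (x ⊗ₜ[F2] (X ⊗ₜ[F2] Y)) = (c 0 * x 0 + c 1 * x 1) • Ofun X Y := by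
  simp [L, TensorProduct.lift.tmul, Obil]

def toM (f : Fin 2 → Fin 2 → Fin 2 → Fin 2 → ZMod 2) : M4 :=
  Matrix.of fun p q => f p.1 p.2 q.1 q.2

end T6Aux

open T6Aux in
/-- `T₆ = ∑ i j k, A i j ⊗ e j k ⊗ e k i` has tensor rank at least 6. -/
theorem rank_T6_ge_six (r : ℕ)
    (a : Fin r → (Fin 2 → ZMod 2))
    (v w : Fin r → Matrix (Fin 2) (Fin 2) (ZMod 2))
    (h : (∑ i : Fin 2, ∑ j : Fin 2, ∑ k : Fin 2,
          A i j ⊗ₜ[ZMod 2] (e j k ⊗ₜ[ZMod 2] e k i))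
      = ∑ t : Fin r, a t ⊗ₜ[ZMod 2] (v t ⊗ₜ[ZMod 2] w t)) :
    6 ≤ r := by
  have hx01 : ∀ y : ZMod 2, y = 0 ∨ y = 1 := by decide
  have key : ∀ c : Fin 2 → ZMod 2,
      (∑ i : Fin 2, ∑ j : Fin 2, ∑ k : Fin 2,
        (c 0 * A i j 0 + c 1 * A i j 1) • Ofun (e j k) (e k i)).rank = 4 →
      4 ≤ (Finset.univ.filter
        (fun t => c 0 * a t 0 + c 1 * a t 1 = (1 : ZMod 2))).card := by
    intro c hrank
    have hc := congrArg (L c) h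
    simp only [map_sum, L_tmul] at hc
    have hr : (∑ t : Fin r, (c 0 * a t 0 + c 1 * a t 1) • Ofun (v t) (w t))
        = ∑ t ∈ Finset.univ.filter
            (fun t => c 0 * a t 0 + c 1 * a t 1 = (1 : ZMod 2)),
            Ofun (v t) (w t) := by
      rw [Finset.sum_filter]
      refine Finset.sum_congr rfl fun t _ => ?_
      rcases hx01 (c 0 * a t 0 + c 1 * a t 1) with h0 | h1
      · rw [h0, if_neg (by decide : ¬(0 : ZMod 2) = 1), zero_smul]
      · rw [h1, if_pos rfl, one_smul]
    rw [hc, hr] at hrank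
    calc (4 : ℕ) = _ := hrank.symm
      _ ≤ _ := rank_sum_le _ _ (fun t => rank_Ofun_le _ _)
  have hrk : ∀ (c : Fin 2 → ZMod 2) (B : M4),
      (∑ i : Fin 2, ∑ j : Fin 2, ∑ k : Fin 2,
        (c 0 * A i j 0 + c 1 * A i j 1) • Ofun (e j k) (e k i)) * B = 1 →
      B * (∑ i : Fin 2, ∑ j : Fin 2, ∑ k : Fin 2,
        (c 0 * A i j 0 + c 1 * A i j 1) • Ofun (e j k) (e k i)) = 1 →
      (∑ i : Fin 2, ∑ j : Fin 2, ∑ k : Fin 2,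
        (c 0 * A i j 0 + c 1 * A i j 1) • Ofun (e j k) (e k i)).rank = 4 := by
    intro c B h1 h2
    have hu : IsUnit (∑ i : Fin 2, ∑ j : Fin 2, ∑ k : Fin 2,
        (c 0 * A i j 0 + c 1 * A i j 1) • Ofun (e j k) (e k i)) :=
      ⟨⟨_, B, h1, h2⟩, rfl⟩
    rw [Matrix.rank_of_isUnit _ hu]
    simp
  have h1 := key ![1, 0] (hrk _
    (toM ![![![![1,0],![0,0]], ![![0,0],![1,0]]], ![![![0,1],![0,0]], ![![0,0],![0,1]]]])
    (by decide +kernel) (by decide +kernel))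
  have h2 := key ![0, 1] (hrk _
    (toM ![![![![1,0],![1,0]], ![![1,0],![0,0]]], ![![![0,1],![0,1]], ![![0,1],![0,0]]]])
    (by decide +kernel) (by decide +kernel))
  have h3 := key ![1, 1] (hrk _
    (toM ![![![![0,0],![1,0]], ![![1,0],![1,0]]], ![![![0,0],![0,1]], ![![0,1],![0,1]]]])
    (by decide +kernel) (by decide +kernel))
  have hbound : ∀ x : Fin 2 → ZMod 2,
      ((if ![(1:ZMod 2),0] 0 * x 0 + ![(1:ZMod 2),0] 1 * x 1 = 1 then 1 else 0) +
       (if ![(0:ZMod 2),1] 0 * x 0 + ![(0:ZMod 2),1] 1 * x 1 = 1 then 1 else 0) +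
       (if ![(1:ZMod 2),1] 0 * x 0 + ![(1:ZMod 2),1] 1 * x 1 = 1 then 1 else 0) : ℕ) ≤ 2 := by
    decide
  have hcount :
      (Finset.univ.filter
        (fun t => ![(1:ZMod 2),0] 0 * a t 0 + ![(1:ZMod 2),0] 1 * a t 1 = (1 : ZMod 2))).card +
      (Finset.univ.filter
        (fun t => ![(0:ZMod 2),1] 0 * a t 0 + ![(0:ZMod 2),1] 1 * a t 1 = (1 : ZMod 2))).card +
      (Finset.univ.filter
        (fun t => ![(1:ZMod 2),1] 0 * a t 0 + ![(1:ZMod 2),1] 1 * a t 1 = (1 : ZMod 2))).card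
      ≤ 2 * r := by
    rw [Finset.card_filter, Finset.card_filter, Finset.card_filter,
      ← Finset.sum_add_distrib, ← Finset.sum_add_distrib]
    calc _ ≤ ∑ _t : Fin r, 2 := Finset.sum_le_sum (fun t _ => hbound (a t))
      _ = 2 * r := by simp [Finset.sum_const, mul_comm]
  omega
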